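/- Let A be an annihilator nilpotent skew brace. Then the set T₊(A) of elements of finite additive order equals the set T∘(A) of elements of finite multiplicative order. -/

import Mathlib

/-!
Induct on the length of the annihilator series, passing to `B / Ann(B)`. Annihilator nilpotency
makes `(B,+)` nilpotent, and `x ^ k = λ_1(x) + λ_x(x) + ⋯ + λ_{x^(k-1)}(x)` with every `λ_a` an
additive automorphism.

If `m • x = 0` and `x ^ k ∈ Ann(B)`, then `x ^ k` lies in the subgroup generated by the
`m`-torsion elements `λ_{x^i}(x)`, hence has finite additive order, and on `Ann(B)` the two orders
agree. If `x ^ k = 0` and `m • x ∈ Ann(B)`, the summands `λ_{x^i}(x)` of `x ^ k = 0` all have the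
same central `m`-th multiple `m • x`, so `k • (m • x)` vanishes in the abelianisation of the
subgroup they generate.

Both cases rest on one fact about nilpotent groups. Index the lower central series from
`γ₀ = G`, `γ₁ = [G, G]`. If `G` is generated by elements whose `n`-th powers are central and
`γ_{c+1} = 1`, then `u ^ n ^ c = 1` for all `u ∈ [G, G]`. Induct on `c`: for `k ∈ γ_{c-1}` the map
`g ↦ ⁅k, g⁆` is a homomorphism into the centre that kills every generator's `n`-th power, so `γ_c`
has exponent dividing `n`; then pass to `G / γ_c`.
-/

/-- A skew brace: a type with two group structures `(B,+)` and `(B,∘)`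
(the multiplicative group is written with `*`) sharing the same underlying set,
such that `a ∘ (b + c) = a ∘ b - a + a ∘ c`. -/
class SkewBrace (B : Type*) extends AddGroup B, Group B where
  circ_add : ∀ a b c : B, a * (b + c) = a * b - a + a * c

namespace SkewBrace

variable {B : Type*} [SkewBrace B]

/-- `lam a b = -a + a ∘ b`, i.e. `λ_a(b)`. -/
def lam (a b : B) : B := -a + a * b

/-- `a * b` (the star operation) `= λ_a(b) - b = -a + a ∘ b - b`. -/
def starOp (a b : B) : B := -a + a * b - b

/-- `X * Y` : the additive subgroup generated by all `x * y`, `x ∈ X`, `y ∈ Y`,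
regarded as a set. -/
def starSpan (X Y : Set B) : Set B :=
  (AddSubgroup.closure {z : B | ∃ x ∈ X, ∃ y ∈ Y, z = starOp x y} : AddSubgroup B)

/-- `[X,Y]₊` : the additive subgroup generated by all additive commutators
`x + y - x - y`, `x ∈ X`, `y ∈ Y`, regarded as a set. -/
def addCommSpan (X Y : Set B) : Set B :=
  (AddSubgroup.closure {z : B | ∃ x ∈ X, ∃ y ∈ Y, z = x + y - x - y} : AddSubgroup B)

/-- A sub skew brace: a subset containing `0` and closed under both group
operations and both inverses. -/
def IsSubSkewBrace (S : Set B) : Prop :=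
  0 ∈ S ∧ (∀ a ∈ S, ∀ b ∈ S, a + b ∈ S) ∧ (∀ a ∈ S, -a ∈ S) ∧
    (∀ a ∈ S, ∀ b ∈ S, a * b ∈ S) ∧ (∀ a ∈ S, a⁻¹ ∈ S)

/-- An ideal: a sub skew brace that is normal in `(B,+)` and in `(B,∘)` and
invariant under all `λ_a`. -/
def IsIdeal (S : Set B) : Prop :=
  IsSubSkewBrace S ∧ (∀ a : B, ∀ i ∈ S, a + i - a ∈ S) ∧
    (∀ a : B, ∀ i ∈ S, a * i * a⁻¹ ∈ S) ∧ (∀ a : B, ∀ i ∈ S, lam a i ∈ S)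

/-- The annihilator `Ann(B) = {x | x∘a = a∘x = x+a = a+x for all a}`. -/
def annSet (B : Type*) [SkewBrace B] : Set B :=
  {x | ∀ a : B, x * a = a * x ∧ x * a = x + a ∧ x + a = a + x}

/-- The annihilator series: `Ann₀(B) = 0` and `Ann_{n+1}(B)` is the preimage of
`Ann(B/Annₙ(B))` under the quotient map; membership is expressed via coset
equalities modulo `Annₙ(B)`. -/
def annSeries (B : Type*) [SkewBrace B] : ℕ → Set B
  | 0 => {0}
  | n + 1 => {x | ∀ a : B,
      x * a - a * x ∈ annSeries B n ∧
      x * a - (x + a) ∈ annSeries B n ∧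
      (x + a) - (a + x) ∈ annSeries B n}

/-- `B` is annihilator nilpotent if `Annₙ(B) = B` for some `n`. -/
def AnnNilpotent (B : Type*) [SkewBrace B] : Prop :=
  ∃ n : ℕ, annSeries B n = Set.univ

/-- `leftPow B n` is `B^{n+1}`: `B¹ = B`, `B^{n+1} = B * Bⁿ`. -/
def leftPow (B : Type*) [SkewBrace B] : ℕ → Set B
  | 0 => Set.univ
  | n + 1 => starSpan Set.univ (leftPow B n)

/-- `rightPow B n` is `B⁽ⁿ⁺¹⁾`: `B⁽¹⁾ = B`, `B⁽ⁿ⁺¹⁾ = B⁽ⁿ⁾ * B`. -/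
def rightPow (B : Type*) [SkewBrace B] : ℕ → Set B
  | 0 => Set.univ
  | n + 1 => starSpan (rightPow B n) Set.univ

/-- `B` is left nilpotent if `Bⁿ = 0` for some `n ≥ 1`. -/
def LeftNilpotent (B : Type*) [SkewBrace B] : Prop :=
  ∃ n : ℕ, leftPow B n = ({0} : Set B)

/-- `B` is right nilpotent if `B⁽ⁿ⁾ = 0` for some `n ≥ 1`. -/
def RightNilpotent (B : Type*) [SkewBrace B] : Prop :=
  ∃ n : ℕ, rightPow B n = ({0} : Set B)

/-- `strongPow B n` is `B^[n+1]`: `B^[1] = B`, and `B^[n+1]` is the additive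
subgroup generated by `⋃_{i=1}^{n} B^[i] * B^[n+1-i]`. -/
def strongPow (B : Type*) [SkewBrace B] : ℕ → Set B
  | 0 => Set.univ
  | n + 1 => (AddSubgroup.closure (⋃ j : Fin (n + 1),
      {z : B | ∃ x ∈ strongPow B j.1, ∃ y ∈ strongPow B (n - j.1), z = starOp x y}) :
        AddSubgroup B)
  decreasing_by
  · exact j.isLt
  · omega

/-- `B` is strongly nilpotent if `B^[n] = 0` for some `n ≥ 1`. -/
def StronglyNilpotent (B : Type*) [SkewBrace B] : Prop :=
  ∃ n : ℕ, strongPow B n = ({0} : Set B)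

/-- `gammaAux B n` is `Γ_[n+1](B)`: `Γ_[1](B) = B` and, for `n ≥ 2`, `Γ_[n](B)` is
the additive subgroup generated by the sets `Γ_[i](B) * Γ_[n-i](B)` and
`[Γ_[i](B), Γ_[n-i](B)]₊` for `1 ≤ i ≤ n-1`. -/
def gammaAux (B : Type*) [SkewBrace B] : ℕ → Set B
  | 0 => Set.univ
  | n + 1 => (AddSubgroup.closure (⋃ j : Fin (n + 1),
      {z : B | ∃ x ∈ gammaAux B j.1, ∃ y ∈ gammaAux B (n - j.1),
        z = starOp x y ∨ z = x + y - x - y}) : AddSubgroup B)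
  decreasing_by
  · exact j.isLt
  · omega

/-- `Γ_[n](B)` for `n ≥ 1` (one-based indexing as in the paper). -/
def gammaBr (B : Type*) [SkewBrace B] (n : ℕ) : Set B := gammaAux B (n - 1)

/-- `B` is finitely generated as a skew brace: there is a finite subset whose
smallest containing sub skew brace is `B` itself. -/
def SBFinitelyGenerated (B : Type*) [SkewBrace B] : Prop :=
  ∃ S : Set B, S.Finite ∧ ∀ T : Set B, IsSubSkewBrace T → S ⊆ T → T = Set.univ

/-- `B` satisfies the ascending chain condition on sub skew braces. -/
def ACCSubSkewBrace (B : Type*) [SkewBrace B] : Prop :=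
  ∀ f : ℕ → Set B, (∀ n, IsSubSkewBrace (f n)) → (∀ n, f n ⊆ f (n + 1)) →
    ∃ N : ℕ, ∀ n, N ≤ n → f n = f N

end SkewBrace

section NilpotentTorsion

open Subgroup
open scoped commutatorElement IsMulCommutative

variable {G : Type*} [Group G]

theorem commutatorElement_mul_right_of_commute {k a b : G} (h : Commute a ⁅k, b⁆) :
    ⁅k, a * b⁆ = ⁅k, a⁆ * ⁅k, b⁆ := by
  rw [commutatorElement_mul_right_eq_mul_conj, mul_assoc _ a, h.eq, ← mul_assoc,
    mul_inv_cancel_right]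

def commutatorHomOfCentral (k : G) (hk : ∀ h, ⁅k, h⁆ ∈ center G) : G →* center G where
  toFun h := ⟨⁅k, h⁆, hk h⟩
  map_one' := by ext; simp
  map_mul' a b := Subtype.ext <|
    commutatorElement_mul_right_of_commute (mem_center_iff.mp (hk b) a)

theorem lowerCentralSeries_le_center_of_succ_eq_bot {c : ℕ}
    (hc : (⊤ : Subgroup G).lowerCentralSeries (c + 1) = ⊥) :
    (⊤ : Subgroup G).lowerCentralSeries c ≤ center G := fun z hz =>
  mem_center_iff.mpr fun g => by
    have h := commutator_mem_commutator hz (mem_top g)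
    rw [← Subgroup.lowerCentralSeries_succ, hc, mem_bot, commutatorElement_eq_one_iff_mul_comm] at h
    exact h.symm

theorem pow_eq_one_of_mem_lowerCentralSeries {X : Set G} (hX : closure X = ⊤) {n c : ℕ}
    (hXn : ∀ x ∈ X, x ^ n ∈ center G) (hc : (⊤ : Subgroup G).lowerCentralSeries (c + 2) = ⊥)
    {z : G} (hz : z ∈ (⊤ : Subgroup G).lowerCentralSeries (c + 1)) : z ^ n = 1 := by
  have hcen := lowerCentralSeries_le_center_of_succ_eq_bot hc
  suffices (⊤ : Subgroup G).lowerCentralSeries (c + 1) ≤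
      (powMonoidHom n : center G →* center G).ker.map (center G).subtype by
    obtain ⟨w, hw, rfl⟩ := this hz
    simpa using congrArg Subtype.val (MonoidHom.mem_ker.mp hw)
  rw [Subgroup.lowerCentralSeries_succ, commutator_le]
  intro k hk g _
  let F := commutatorHomOfCentral k fun h => hcen (commutator_mem_commutator hk (mem_top h))
  have hF : (powMonoidHom n).comp F = 1 := MonoidHom.eq_of_eqOn_dense hX fun x hx => by
    ext
    simp only [MonoidHom.comp_apply, powMonoidHom_apply, MonoidHom.one_apply, ← map_pow]
    exact commutatorElement_eq_one_iff_mul_comm.mpr (mem_center_iff.mp (hXn x hx) k)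
  exact ⟨F g, DFunLike.congr_fun hF g, rfl⟩

theorem MonoidHom.map_mem_center_of_surjective {H : Type*} [Group H] {f : G →* H}
    (hf : Function.Surjective f) {z : G} (hz : z ∈ center G) : f z ∈ center H :=
  mem_center_iff.mpr fun q => by
    obtain ⟨g, rfl⟩ := hf q
    rw [← map_mul, ← map_mul, mem_center_iff.mp hz g]

theorem pow_pow_eq_one_of_mem_commutator {X : Set G} (hX : closure X = ⊤) {n c : ℕ}
    (hXn : ∀ x ∈ X, x ^ n ∈ center G) (hc : (⊤ : Subgroup G).lowerCentralSeries (c + 1) = ⊥)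
    {u : G} (hu : u ∈ commutator G) : u ^ n ^ c = 1 := by
  induction c generalizing G with
  | zero =>
    rw [top_lowerCentralSeries_one] at hc
    rw [hc, mem_bot] at hu
    rw [hu, one_pow]
  | succ c ih =>
    let Z := (⊤ : Subgroup G).lowerCentralSeries (c + 1)
    let π := QuotientGroup.mk' Z
    have hπ : Function.Surjective π := QuotientGroup.mk'_surjective Z
    have hπX : closure (π '' X) = ⊤ := by
      rw [← MonoidHom.map_closure, hX, ← MonoidHom.range_eq_map, MonoidHom.range_eq_top.mpr hπ]
    have hπc : (⊤ : Subgroup (G ⧸ Z)).lowerCentralSeries (c + 1) = ⊥ := by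
      rw [← MonoidHom.range_eq_top.mpr hπ, MonoidHom.range_eq_map, ← map_lowerCentralSeries,
        Subgroup.map_eq_bot_iff, QuotientGroup.ker_mk']
    have hπu : π u ∈ commutator (G ⧸ Z) := by
      rw [← top_lowerCentralSeries_one, ← MonoidHom.range_eq_top.mpr hπ, MonoidHom.range_eq_map,
        ← map_lowerCentralSeries, top_lowerCentralSeries_one]
      exact mem_map_of_mem π hu
    have hZ : u ^ n ^ c ∈ Z := by
      rw [← QuotientGroup.ker_mk' Z, MonoidHom.mem_ker, map_pow]
      refine ih hπX ?_ hπc hπu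
      rintro _ ⟨x, hx, rfl⟩
      exact map_pow π x n ▸ MonoidHom.map_mem_center_of_surjective hπ (hXn x hx)
    rw [pow_succ, pow_mul]
    exact pow_eq_one_of_mem_lowerCentralSeries hX hXn hc hZ

theorem isOfFinOrder_of_isOfFinOrder_abelianization [Group.IsNilpotent G] {X : Set G}
    (hX : closure X = ⊤) {n : ℕ} (hn : 0 < n) (hXn : ∀ x ∈ X, x ^ n ∈ center G) {u : G}
    (hu : IsOfFinOrder (Abelianization.of u)) : IsOfFinOrder u := by
  obtain ⟨m, hm, hmu⟩ := isOfFinOrder_iff_pow_eq_one.mp hu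
  obtain ⟨c, hc⟩ := Subgroup.nilpotent_iff_lowerCentralSeries.mp ‹Group.IsNilpotent G›
  have hc' : (⊤ : Subgroup G).lowerCentralSeries (c + 1) = ⊥ :=
    eq_bot_iff.mpr (hc ▸ Subgroup.lowerCentralSeries_antitone ⊤ (Nat.le_succ c))
  have hum : u ^ m ∈ commutator G := by
    rw [← Abelianization.ker_of, MonoidHom.mem_ker, map_pow, hmu]
  refine isOfFinOrder_iff_pow_eq_one.mpr ⟨m * n ^ c, by positivity, ?_⟩
  rw [pow_mul]
  exact pow_pow_eq_one_of_mem_commutator hX hXn hc' hum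

theorem isOfFinOrder_of_mem_closure [Group.IsNilpotent G] {X : Set G} {n : ℕ} (hn : 0 < n)
    (hXn : ∀ x ∈ X, x ^ n = 1) {u : G} (hu : u ∈ closure X) : IsOfFinOrder u := by
  let X' := (closure X).subtype ⁻¹' X
  have hX'n : ∀ x ∈ X', x ^ n = 1 := fun x hx => Subtype.ext (hXn x hx)
  have hab : (powMonoidHom n).comp (Abelianization.of : closure X →* _) = 1 :=
    MonoidHom.eq_of_eqOn_dense (closure_preimage_eq_top X) fun x hx => by
      simp [← map_pow, hX'n x hx]
  have hu' : IsOfFinOrder (⟨u, hu⟩ : closure X) := by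
    refine isOfFinOrder_of_isOfFinOrder_abelianization (closure_preimage_eq_top X) hn
      (fun x hx => hX'n x hx ▸ one_mem _) (isOfFinOrder_iff_pow_eq_one.mpr ⟨n, hn, ?_⟩)
    exact DFunLike.congr_fun hab _
  exact (closure X).subtype.isOfFinOrder hu'

theorem isOfFinOrder_of_list_prod_eq_one [Group.IsNilpotent G] {n k : ℕ} (hn : 0 < n)
    (hk : 0 < k) {w : G} (hw : w ∈ center G) {y : ℕ → G} (hyn : ∀ i, y i ^ n = w)
    (hy : ((List.range k).map y).prod = 1) : IsOfFinOrder w := by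
  let H := closure (Set.range y)
  let y' (i : ℕ) : H := ⟨y i, subset_closure ⟨i, rfl⟩⟩
  let w' : H := y' 0 ^ n
  have hy'n : ∀ i, y' i ^ n = w' := fun i => Subtype.ext (by simp [w', y', hyn])
  have hw' : w' ∈ center H := mem_center_iff.mpr fun g => Subtype.ext <| by
    simp only [coe_mul, hy'n, w', coe_pow, y', hyn, mem_center_iff.mp hw]
  have hy' : ((List.range k).map y').prod = 1 := Subtype.ext <| by
    simp [List.map_map, Function.comp_def, y', hy]
  have hab : Abelianization.of w' ^ k = 1 := calc
    Abelianization.of w' ^ k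
        = ((List.range k).map fun i => powMonoidHom n (Abelianization.of (y' i))).prod := by
      simp [← map_pow, hy'n]
    _ = powMonoidHom n (Abelianization.of ((List.range k).map y').prod) := by
      rw [map_list_prod, map_list_prod, List.map_map, List.map_map]; rfl
    _ = 1 := by rw [hy', map_one, map_one]
  have hH : closure (H.subtype ⁻¹' Set.range y) = ⊤ := closure_preimage_eq_top _
  have hw'fin : IsOfFinOrder w' :=
    isOfFinOrder_of_isOfFinOrder_abelianization hH hn
      (fun x ⟨i, hi⟩ => (Subtype.ext hi : y' i = x) ▸ hy'n i ▸ hw')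
      (isOfFinOrder_iff_pow_eq_one.mpr ⟨k, hk, hab⟩)
  have : (w' : G) = w := by simp [w', y', hyn]
  exact this ▸ H.subtype.isOfFinOrder hw'fin

end NilpotentTorsion

namespace SkewBrace

variable {B : Type*} [SkewBrace B]

theorem one_eq_zero : (1 : B) = 0 := by
  have h := circ_add (1 : B) 0 0
  simp only [one_mul, add_zero, zero_sub] at h
  exact neg_eq_zero.mp h.symm

theorem lam_add (a b c : B) : lam a (b + c) = lam a b + lam a c := by
  simp only [lam, circ_add, sub_eq_add_neg, add_assoc]

def lamHom (a : B) : B →+ B := AddMonoidHom.mk' (lam a) (lam_add a)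

theorem lam_zero (a : B) : lam a 0 = 0 := map_zero (lamHom a)

theorem lam_nsmul (a b : B) (n : ℕ) : lam a (n • b) = n • lam a b := map_nsmul (lamHom a) n b

theorem mul_eq_add_lam (a b : B) : a * b = a + lam a b := by
  rw [lam, add_neg_cancel_left]

theorem pow_eq_sum_lam (x : B) (k : ℕ) :
    x ^ k = ((List.range k).map fun i => lam (x ^ i) x).sum := by
  induction k with
  | zero => rw [pow_zero, one_eq_zero, List.range_zero, List.map_nil, List.sum_nil]
  | succ k ih => rw [pow_succ, mul_eq_add_lam, List.range_succ, List.map_append,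
      List.sum_append, List.map_singleton, List.sum_singleton, ← ih]

namespace annSet

variable {z : B}

theorem mul_eq_add (hz : z ∈ annSet B) (a : B) : z * a = z + a := (hz a).2.1

theorem add_comm (hz : z ∈ annSet B) (a : B) : z + a = a + z := (hz a).2.2

theorem mul_comm (hz : z ∈ annSet B) (a : B) : z * a = a * z := (hz a).1

theorem mul_eq_add_left (hz : z ∈ annSet B) (a : B) : a * z = a + z := by
  rw [← mul_comm hz, mul_eq_add hz, add_comm hz]

theorem lam_eq (hz : z ∈ annSet B) (a : B) : lam a z = z := by
  rw [lam, mul_eq_add_left hz, neg_add_cancel_left]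

theorem pow_eq_nsmul (hz : z ∈ annSet B) (j : ℕ) : z ^ j = j • z := by
  induction j with
  | zero => rw [pow_zero, zero_nsmul, one_eq_zero]
  | succ j ih => rw [pow_succ, ih, mul_eq_add_left hz, succ_nsmul]

theorem zero_mem : (0 : B) ∈ annSet B := fun a => by
  have hl : (0 : B) * a = a := by rw [← one_eq_zero, one_mul]
  have hr : a * (0 : B) = a := by rw [← one_eq_zero, mul_one]
  exact ⟨by rw [hl, hr], by rw [hl, zero_add], by rw [zero_add, add_zero]⟩

theorem add_mem {w : B} (hz : z ∈ annSet B) (hw : w ∈ annSet B) : z + w ∈ annSet B := by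
  intro a
  have hc : z + w + a = a + (z + w) := by
    rw [add_assoc, add_comm hw, ← add_assoc, add_comm hz, add_assoc]
  have hzw := mul_eq_add hz w
  have hl : (z + w) * a = z + w + a := by
    rw [← hzw, mul_assoc, mul_eq_add hw, mul_eq_add hz, hzw, add_assoc]
  have hr : a * (z + w) = a + (z + w) := by
    rw [← hzw, ← mul_assoc, mul_eq_add_left hz, mul_eq_add_left hw, add_assoc, hzw]
  exact ⟨by rw [hl, hr, hc], hl, hc⟩

theorem neg_mem (hz : z ∈ annSet B) : -z ∈ annSet B := by
  have hinv : z⁻¹ = -z :=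
    inv_eq_of_mul_eq_one_right (by rw [mul_eq_add hz, add_neg_cancel, one_eq_zero])
  intro a
  have hl : -z * a = -z + a := by
    rw [← hinv, inv_mul_eq_iff_eq_mul, mul_eq_add hz, hinv, add_neg_cancel_left]
  have hr : a * -z = a + -z := by
    rw [← hinv, mul_inv_eq_iff_eq_mul, mul_eq_add_left hz, hinv, neg_add_cancel_right]
  have hc : -z + a = a + -z := by
    rw [neg_add_eq_iff_eq_add, ← add_assoc, add_comm hz, add_neg_cancel_right]
  exact ⟨by rw [hl, hr, hc], hl, hc⟩

theorem isOfFinOrder_iff (hz : z ∈ annSet B) : IsOfFinOrder z ↔ IsOfFinAddOrder z := by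
  simp only [isOfFinOrder_iff_pow_eq_one, isOfFinAddOrder_iff_nsmul_eq_zero, pow_eq_nsmul hz,
    one_eq_zero]

end annSet

def annAddSubgroup (B : Type*) [SkewBrace B] : AddSubgroup B where
  carrier := annSet B
  zero_mem' := annSet.zero_mem
  add_mem' := annSet.add_mem
  neg_mem' := annSet.neg_mem

instance : (annAddSubgroup B).Normal :=
  ⟨fun z hz g => by
    show g + z + -g ∈ annSet B
    rwa [add_assoc, annSet.add_comm hz, add_neg_cancel_left]⟩

def annCon (B : Type*) [SkewBrace B] : Con B where
  toSetoid := QuotientAddGroup.leftRel (annAddSubgroup B)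
  mul' {x x' y y'} hx hy := by
    rw [QuotientAddGroup.leftRel_apply] at hx hy ⊢
    obtain ⟨i, hi, rfl⟩ : ∃ i ∈ annSet B, x' = x + i := ⟨-x + x', hx, by rw [add_neg_cancel_left]⟩
    obtain ⟨j, hj, rfl⟩ : ∃ j ∈ annSet B, y' = y + j := ⟨-y + y', hy, by rw [add_neg_cancel_left]⟩
    have : (x + i) * (y + j) = i + (x * y + j) := by
      rw [← annSet.mul_eq_add_left hj, ← annSet.add_comm hi, ← annSet.mul_eq_add hi, mul_assoc,
        ← mul_assoc x, annSet.mul_eq_add hi, annSet.mul_eq_add_left hj]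
    show -(x * y) + (x + i) * (y + j) ∈ annSet B
    rw [this, annSet.add_comm hi, ← add_assoc, neg_add_cancel_left]
    exact annSet.add_mem hj hi

-- Modulo `Ann(B)` the additive and circle cosets of `x` agree (`x + i = i ∘ x`), so the additive
-- quotient also carries the quotient circle group.
abbrev AnnQuot (B : Type*) [SkewBrace B] := B ⧸ annAddSubgroup B

instance : Group (AnnQuot B) := inferInstanceAs (Group (annCon B).Quotient)

theorem AnnQuot.coe_mul (x y : B) : ((x * y : B) : AnnQuot B) = x * y := rfl

instance : SkewBrace (AnnQuot B) :=
  { (inferInstance : AddGroup (AnnQuot B)), (inferInstance : Group (AnnQuot B)) with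
  circ_add a b c := by
    induction a using QuotientAddGroup.induction_on
    induction b using QuotientAddGroup.induction_on
    induction c using QuotientAddGroup.induction_on
    simp only [← AnnQuot.coe_mul, ← QuotientAddGroup.mk_add, ← QuotientAddGroup.mk_sub, circ_add] }

theorem AnnQuot.coe_pow (x : B) (n : ℕ) : ((x ^ n : B) : AnnQuot B) = (x : AnnQuot B) ^ n :=
  map_pow (annCon B).mk' x n

theorem AnnQuot.coe_eq_zero_iff {x : B} : (x : AnnQuot B) = 0 ↔ x ∈ annSet B :=
  QuotientAddGroup.eq_zero_iff x

theorem mem_annSeries_succ_iff_coe (n : ℕ) (x : B) :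
    x ∈ annSeries B (n + 1) ↔ (x : AnnQuot B) ∈ annSeries (AnnQuot B) n := by
  induction n generalizing x with
  | zero =>
    simp only [annSeries, Set.mem_ofPred_eq, Set.mem_singleton_iff, sub_eq_zero,
      AnnQuot.coe_eq_zero_iff]
    rfl
  | succ n ih =>
    show (∀ a : B, _ ∧ _ ∧ _) ↔ ∀ q : AnnQuot B, _ ∧ _ ∧ _
    simp only [ih, QuotientAddGroup.mk_sub, QuotientAddGroup.mk_add, AnnQuot.coe_mul]
    exact ⟨fun h q => QuotientAddGroup.induction_on q h, fun h a => h a⟩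

theorem annSeries_annQuot_eq_univ {n : ℕ} (h : annSeries B (n + 1) = Set.univ) :
    annSeries (AnnQuot B) n = Set.univ :=
  Set.eq_univ_of_forall fun q => QuotientAddGroup.induction_on q fun x =>
    (mem_annSeries_succ_iff_coe n x).mp (h ▸ Set.mem_univ x)

theorem ofAdd_mem_upperCentralSeries {n : ℕ} {x : B} (hx : x ∈ annSeries B n) :
    Multiplicative.ofAdd x ∈ Subgroup.upperCentralSeries (Multiplicative B) n := by
  induction n generalizing x with
  | zero =>
    rw [show x = 0 from hx]
    exact (Subgroup.upperCentralSeries (Multiplicative B) 0).one_mem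
  | succ n ih =>
    refine Subgroup.mem_upperCentralSeries_succ_iff.mpr fun y => ?_
    have h := ih ((hx y.toAdd).2.2)
    rwa [sub_eq_add_neg, neg_add_rev, ← add_assoc] at h

theorem isNilpotent_multiplicative_of_annSeries_eq_univ {n : ℕ} (h : annSeries B n = Set.univ) :
    Group.IsNilpotent (Multiplicative B) :=
  ⟨n, eq_top_iff.mpr fun u _ => ofAdd_mem_upperCentralSeries (h ▸ Set.mem_univ u.toAdd)⟩

theorem isOfFinOrder_of_isOfFinAddOrder [Group.IsNilpotent (Multiplicative B)] {x : B}
    (hx : IsOfFinAddOrder x) (hq : IsOfFinOrder (x : AnnQuot B)) : IsOfFinOrder x := by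
  obtain ⟨m, hm, hmx⟩ := isOfFinAddOrder_iff_nsmul_eq_zero.mp hx
  obtain ⟨k, hk, hkx⟩ := isOfFinOrder_iff_pow_eq_one.mp hq
  have hann : x ^ k ∈ annSet B := by
    rw [← AnnQuot.coe_eq_zero_iff, AnnQuot.coe_pow, hkx, one_eq_zero]
  have hfin : IsOfFinOrder (Multiplicative.ofAdd (x ^ k)) := by
    refine isOfFinOrder_of_mem_closure (X := Set.range fun i => .ofAdd (lam (x ^ i) x)) hm ?_ ?_
    · rintro _ ⟨i, rfl⟩
      rw [← ofAdd_nsmul, ← lam_nsmul, hmx, lam_zero, ofAdd_zero]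
    · rw [pow_eq_sum_lam, ofAdd_list_prod, List.map_map]
      exact list_prod_mem <| List.forall_mem_map.mpr fun i _ =>
        Subgroup.subset_closure (Set.mem_range_self i)
  rw [isOfFinOrder_ofAdd_iff, ← annSet.isOfFinOrder_iff hann] at hfin
  exact hfin.of_pow hk.ne'

theorem isOfFinAddOrder_of_isOfFinOrder [Group.IsNilpotent (Multiplicative B)] {x : B}
    (hx : IsOfFinOrder x) (hq : IsOfFinAddOrder (x : AnnQuot B)) : IsOfFinAddOrder x := by
  obtain ⟨k, hk, hkx⟩ := isOfFinOrder_iff_pow_eq_one.mp hx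
  obtain ⟨m, hm, hmx⟩ := isOfFinAddOrder_iff_nsmul_eq_zero.mp hq
  have hann : m • x ∈ annSet B := by
    rw [← AnnQuot.coe_eq_zero_iff, QuotientAddGroup.mk_nsmul, hmx]
  have hfin : IsOfFinOrder (Multiplicative.ofAdd (m • x)) := by
    refine isOfFinOrder_of_list_prod_eq_one (y := fun i => .ofAdd (lam (x ^ i) x)) hm hk
      (Subgroup.mem_center_iff.mpr fun g => (annSet.add_comm hann g.toAdd).symm) (fun i => ?_) ?_
    · rw [← ofAdd_nsmul, ← lam_nsmul, annSet.lam_eq hann]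
    · have h := congrArg Multiplicative.ofAdd (pow_eq_sum_lam x k)
      rwa [hkx, one_eq_zero, ofAdd_zero, ofAdd_list_prod, List.map_map, eq_comm] at h
  rw [isOfFinOrder_ofAdd_iff] at hfin
  exact (isOfFinAddOrder_nsmul.mp hfin).resolve_right hm.ne'

theorem isOfFinAddOrder_iff_isOfFinOrder {n : ℕ} (h : annSeries B n = Set.univ) (x : B) :
    IsOfFinAddOrder x ↔ IsOfFinOrder x := by
  induction n generalizing B with
  | zero =>
    obtain rfl : x = 0 := (h.symm ▸ Set.mem_univ x : x ∈ annSeries B 0)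
    exact iff_of_true IsOfFinAddOrder.zero (one_eq_zero (B := B) ▸ IsOfFinOrder.one)
  | succ n ih =>
    have := isNilpotent_multiplicative_of_annSeries_eq_univ h
    have hq := ih (annSeries_annQuot_eq_univ h) (x : AnnQuot B)
    exact ⟨fun hx => isOfFinOrder_of_isOfFinAddOrder hx
        (hq.mp ((QuotientAddGroup.mk' _).isOfFinAddOrder hx)),
      fun hx => isOfFinAddOrder_of_isOfFinOrder hx (hq.mpr ((annCon B).mk'.isOfFinOrder hx))⟩

/-- Proposition 4.2(1): in an annihilator nilpotent skew brace, the elements of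
finite additive order are exactly the elements of finite multiplicative
order. -/
theorem stmt11 {A : Type*} [SkewBrace A] (hann : AnnNilpotent A) :
    {x : A | IsOfFinAddOrder x} = {x : A | IsOfFinOrder x} := by
  obtain ⟨n, hn⟩ := hann
  ext x
  exact isOfFinAddOrder_iff_isOfFinOrder hn x

end SkewBrace
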